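/- For every n, l ∈ ℕ, the rank-one operator E_{n,l} : ζ ↦ ⟪e_l, ζ⟫ e_n on ℓ²(ℕ, ℂ) belongs to the smallest closed unital star-subalgebra of B(ℓ²(ℕ, ℂ)) containing A and C_λ. (In the paper these operators E_{n,l} are constructed inside ψ^{2,λ}(C(SU_q(2))) using spectral projections of γγ* and powers of α, and are used to prove surjectivity of the Plancherel unitary Q_L.) -/

import Mathlib

/-!
`C_λ* C_λ` is diagonal with eigenvalues `q^{2k}`, so its powers converge in norm to the
projection `E_{0,0}` onto `e_0`, which therefore lies in the closed algebra. As `A` is a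
weighted shift with nonzero weights, `(A*)^n e_0` is a nonzero multiple of `e_n`, so
`(A*)^n E_{0,0} A^l` is a nonzero multiple of `E_{n,l}`.
-/

open ContinuousLinearMap InnerProductSpace Filter Topology
open scoped ComplexConjugate lp

theorem ContinuousLinearMap.pow_apply_of_apply_eq_smul {R M : Type*} [Semiring R]
    [TopologicalSpace M] [AddCommMonoid M] [Module R M] {T : M →L[R] M} {v : M} {c : R}
    (hv : T v = c • v) (m : ℕ) : (T ^ m) v = c ^ m • v := by
  induction m with
  | zero => simp
  | succ m ih => rw [pow_succ', mul_apply_eq_comp, ih, map_smul, hv, smul_smul, pow_succ]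

namespace HilbertBasis

variable {ι 𝕜 E : Type*} [RCLike 𝕜] [NormedAddCommGroup E] [InnerProductSpace 𝕜 E]

theorem ofRepr_refl_apply [DecidableEq ι] (i : ι) :
    ofRepr (LinearIsometryEquiv.refl 𝕜 ℓ²(ι, 𝕜)) i = lp.single 2 i 1 :=
  (HilbertBasis.repr_symm_single _ i).symm

section

variable (b : HilbertBasis ι 𝕜 E)

theorem inner_eq_ite [DecidableEq ι] (i j : ι) :
    inner 𝕜 (b i) (b j) = if i = j then 1 else 0 :=
  orthonormal_iff_ite.mp b.orthonormal i j

theorem ext_inner {x y : E} (h : ∀ i, inner 𝕜 (b i) x = inner 𝕜 (b i) y) : x = y :=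
  b.repr.injective <| lp.ext <| funext fun i => by simp only [b.repr_apply_apply, h]

variable [CompleteSpace E] {T : E →L[𝕜] E} {a : ι → 𝕜}

theorem adjoint_apply_of_apply_eq_smul (hT : ∀ i, T (b i) = a i • b i) (i : ι) :
    adjoint T (b i) = conj (a i) • b i := by
  classical
  refine b.ext_inner fun j => ?_
  rw [adjoint_inner_right, hT, inner_smul_left, inner_smul_right, b.inner_eq_ite]
  split_ifs with h <;> simp [h]

theorem inner_apply_of_apply_eq_smul (hT : ∀ i, T (b i) = a i • b i) (i : ι) (x : E) :
    inner 𝕜 (b i) (T x) = a i * inner 𝕜 (b i) x := by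
  rw [← adjoint_inner_left, b.adjoint_apply_of_apply_eq_smul hT, inner_smul_left,
    RCLike.conj_conj]

theorem adjoint_mul_self_apply_of_apply_eq_smul (hT : ∀ i, T (b i) = a i • b i) (i : ι) :
    (adjoint T * T) (b i) = ((‖a i‖ ^ 2 : ℝ) : 𝕜) • b i := by
  rw [mul_apply_eq_comp, hT, map_smul, b.adjoint_apply_of_apply_eq_smul hT, smul_smul,
    RCLike.mul_conj, RCLike.ofReal_pow]

theorem opNorm_le_of_apply_eq_smul (hT : ∀ i, T (b i) = a i • b i) {ε : ℝ} (hε : 0 ≤ ε)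
    (ha : ∀ i, ‖a i‖ ≤ ε) : ‖T‖ ≤ ε := by
  refine T.opNorm_le_bound hε fun x => ?_
  calc ‖T x‖ = ‖b.repr (T x)‖ := (b.repr.norm_map _).symm
    _ ≤ ‖(ε : 𝕜) • b.repr x‖ := lp.norm_mono two_ne_zero fun i => by
        rw [lp.coeFn_smul, Pi.smul_apply, b.repr_apply_apply, b.repr_apply_apply,
          b.inner_apply_of_apply_eq_smul hT, norm_smul, norm_mul, RCLike.norm_ofReal,
          abs_of_nonneg hε]
        exact mul_le_mul_of_nonneg_right (ha i) (norm_nonneg _)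
    _ = ε * ‖x‖ := by rw [norm_smul, RCLike.norm_ofReal, abs_of_nonneg hε, b.repr.norm_map]

end

section

variable [CompleteSpace E] (b : HilbertBasis ℕ 𝕜 E)

theorem tendsto_pow_rankOne_of_apply_eq_smul {T : E →L[𝕜] E} {d : ℕ → 𝕜}
    (hT : ∀ k, T (b k) = d k • b k) (hd0 : d 0 = 1) {r : ℝ} (hr : r < 1)
    (hd : ∀ k, ‖d (k + 1)‖ ≤ r) :
    Tendsto (T ^ ·) atTop (𝓝 (rankOne 𝕜 (b 0) (b 0))) := by
  have hr0 : 0 ≤ r := (norm_nonneg _).trans (hd 0)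
  have hdiff : ∀ m k, (T ^ m - rankOne 𝕜 (b 0) (b 0)) (b k) =
      (d k ^ m - if 0 = k then 1 else 0) • b k := fun m k => by
    rw [sub_apply, pow_apply_of_apply_eq_smul (hT k), rankOne_apply, b.inner_eq_ite, sub_smul]
    split_ifs with h <;> simp [h]
  have hnorm : ∀ m, ‖T ^ m - rankOne 𝕜 (b 0) (b 0)‖ ≤ r ^ m := fun m =>
    b.opNorm_le_of_apply_eq_smul (hdiff m) (by positivity) fun k => by
      cases k with
      | zero => simpa [hd0] using pow_nonneg hr0 m
      | succ k => simpa [norm_pow] using pow_le_pow_left₀ (norm_nonneg _) (hd k) m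
  rw [tendsto_iff_norm_sub_tendsto_zero]
  exact squeeze_zero (fun _ => norm_nonneg _) hnorm
    (tendsto_pow_atTop_nhds_zero_of_lt_one hr0 hr)

theorem adjoint_apply_of_weightedShift {A : E →L[𝕜] E} {w : ℕ → 𝕜}
    (hA0 : A (b 0) = 0) (hA : ∀ k, A (b (k + 1)) = w k • b k) (k : ℕ) :
    adjoint A (b k) = conj (w k) • b (k + 1) := by
  refine b.ext_inner fun j => ?_
  rw [adjoint_inner_right, inner_smul_right, b.inner_eq_ite]
  cases j with
  | zero => simp [hA0]
  | succ j =>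
    rw [hA, inner_smul_left, b.inner_eq_ite]
    split_ifs with h <;> simp_all

theorem adjoint_pow_apply_zero_of_weightedShift {A : E →L[𝕜] E} {w : ℕ → 𝕜}
    (hA0 : A (b 0) = 0) (hA : ∀ k, A (b (k + 1)) = w k • b k) (n : ℕ) :
    (adjoint A ^ n) (b 0) = (∏ j ∈ Finset.range n, conj (w j)) • b n := by
  induction n with
  | zero => simp
  | succ n ih =>
    rw [pow_succ', mul_apply_eq_comp, ih, map_smul,
      b.adjoint_apply_of_weightedShift hA0 hA, smul_smul, Finset.prod_range_succ, mul_comm]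

theorem rankOne_mem_of_weightedShift {A : E →L[𝕜] E} {w : ℕ → 𝕜}
    (hA0 : A (b 0) = 0) (hA : ∀ k, A (b (k + 1)) = w k • b k) (hw : ∀ k, w k ≠ 0)
    {S : StarSubalgebra 𝕜 (E →L[𝕜] E)} (hAS : A ∈ S) (hP : rankOne 𝕜 (b 0) (b 0) ∈ S)
    (n l : ℕ) : rankOne 𝕜 (b n) (b l) ∈ S := by
  set W : ℕ → 𝕜 := fun n => ∏ j ∈ Finset.range n, conj (w j)
  have hW : ∀ n, W n ≠ 0 := fun n =>
    Finset.prod_ne_zero_iff.mpr fun j _ => (map_ne_zero _).mpr (hw j)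
  have key : star A ^ n * rankOne 𝕜 (b 0) (b 0) * A ^ l =
      (conj (W l) * W n) • rankOne 𝕜 (b n) (b l) := by
    rw [mul_def, mul_def, comp_rankOne, rankOne_comp, ← star_eq_adjoint (A ^ l), star_pow,
      star_eq_adjoint]
    simp only [b.adjoint_pow_apply_zero_of_weightedShift hA0 hA, map_smul, map_smulₛₗ,
      smul_apply, smul_smul, W]
  have hmem := mul_mem (mul_mem (pow_mem (star_mem hAS) n) hP) (pow_mem hAS l)
  rw [key] at hmem
  have hWW : conj (W l) * W n ≠ 0 := mul_ne_zero ((map_ne_zero _).mpr (hW l)) (hW n)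
  simpa only [smul_smul, inv_mul_cancel₀ hWW, one_smul] using
    S.smul_mem hmem (conj (W l) * W n)⁻¹

end

end HilbertBasis

theorem Real.sqrt_one_sub_pow_pos {q : ℝ} (hq : |q| < 1) (k : ℕ) :
    0 < √(1 - q ^ (2 * (k + 1))) := by
  rw [Real.sqrt_pos, sub_pos, pow_mul]
  exact pow_lt_one₀ (sq_nonneg q) ((sq_lt_one_iff_abs_lt_one q).mpr hq) k.succ_ne_zero

theorem Complex.norm_mul_pow_succ_sq_le {lam : ℂ} (hlam : ‖lam‖ = 1) {q : ℝ}
    (hq : |q| ≤ 1) (k : ℕ) : ‖lam * (q : ℂ) ^ (k + 1)‖ ^ 2 ≤ q ^ 2 := by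
  rw [norm_mul, hlam, one_mul, norm_pow, Complex.norm_real, Real.norm_eq_abs, ← sq_abs q]
  exact pow_le_pow_left₀ (by positivity) (pow_le_of_le_one (abs_nonneg q) hq k.succ_ne_zero) 2

theorem stmt_10_general (q : ℝ) (hq1 : |q| < 1)
    (lam : ℂ) (hlam : ‖lam‖ = 1)
    (A C : lp (fun _ : ℕ => ℂ) 2 →L[ℂ] lp (fun _ : ℕ => ℂ) 2)
    (hA0 : A (lp.single 2 0 (1 : ℂ)) = 0)
    (hA : ∀ k : ℕ, A (lp.single 2 (k + 1) (1 : ℂ)) =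
      ((Real.sqrt (1 - q ^ (2 * (k + 1))) : ℝ) : ℂ) • lp.single 2 k (1 : ℂ))
    (hC : ∀ k : ℕ, C (lp.single 2 k (1 : ℂ)) = (lam * (q : ℂ) ^ k) • lp.single 2 k (1 : ℂ)) :
    ∀ n l : ℕ,
      (innerSL ℂ (lp.single 2 l (1 : ℂ))).smulRight (lp.single 2 n (1 : ℂ)) ∈
        (StarAlgebra.adjoin ℂ
          ({A, C} : Set (lp (fun _ : ℕ => ℂ) 2 →L[ℂ] lp (fun _ : ℕ => ℂ) 2))).topologicalClosure := by
  intro n l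
  let b : HilbertBasis ℕ ℂ ℓ²(ℕ, ℂ) := .ofRepr (.refl ℂ _)
  simp only [← HilbertBasis.ofRepr_refl_apply] at hA0 hA hC ⊢
  set S := StarAlgebra.adjoin ℂ ({A, C} : Set (ℓ²(ℕ, ℂ) →L[ℂ] ℓ²(ℕ, ℂ)))
  have hAS : A ∈ S := StarAlgebra.subset_adjoin ℂ _ (Set.mem_insert _ _)
  have hCS : C ∈ S := StarAlgebra.subset_adjoin ℂ _ (Set.mem_insert_of_mem _ rfl)
  have hCC : ∀ m, (adjoint C * C) ^ m ∈ S.topologicalClosure := fun m => by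
    rw [← star_eq_adjoint]
    exact S.le_topologicalClosure (pow_mem (mul_mem (star_mem hCS) hCS) m)
  have hP : rankOne ℂ (b 0) (b 0) ∈ S.topologicalClosure :=
    S.isClosed_topologicalClosure.mem_of_tendsto
      (b.tendsto_pow_rankOne_of_apply_eq_smul (b.adjoint_mul_self_apply_of_apply_eq_smul hC)
        (by simp [hlam]) ((sq_lt_one_iff_abs_lt_one q).mpr hq1) fun k => by
          rw [RCLike.norm_ofReal, abs_of_nonneg (by positivity)]
          exact Complex.norm_mul_pow_succ_sq_le hlam hq1.le k)
      (.of_forall hCC)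
  have hw (k : ℕ) : ((√(1 - q ^ (2 * (k + 1))) : ℝ) : ℂ) ≠ 0 :=
    Complex.ofReal_ne_zero.mpr (Real.sqrt_one_sub_pow_pos hq1 k).ne'
  exact b.rankOne_mem_of_weightedShift hA0 hA hw (S.le_topologicalClosure hAS) hP n l

/-- Every rank-one operator `E_{n,l} : ζ ↦ ⟪e_l, ζ⟫ e_n` belongs to the smallest
closed unital star-subalgebra of `B(ℓ²(ℕ))` containing `A` and `C_λ`. -/
theorem stmt_10 (q : ℝ) (hq0 : 0 < |q|) (hq1 : |q| < 1)
    (lam : ℂ) (hlam : ‖lam‖ = 1)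
    (A C : lp (fun _ : ℕ => ℂ) 2 →L[ℂ] lp (fun _ : ℕ => ℂ) 2)
    (hA0 : A (lp.single 2 0 (1 : ℂ)) = 0)
    (hA : ∀ k : ℕ, A (lp.single 2 (k + 1) (1 : ℂ)) =
      ((Real.sqrt (1 - q ^ (2 * (k + 1))) : ℝ) : ℂ) • lp.single 2 k (1 : ℂ))
    (hC : ∀ k : ℕ, C (lp.single 2 k (1 : ℂ)) = (lam * (q : ℂ) ^ k) • lp.single 2 k (1 : ℂ)) :
    ∀ n l : ℕ,
      (innerSL ℂ (lp.single 2 l (1 : ℂ))).smulRight (lp.single 2 n (1 : ℂ)) ∈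
        (StarAlgebra.adjoin ℂ
          ({A, C} : Set (lp (fun _ : ℕ => ℂ) 2 →L[ℂ] lp (fun _ : ℕ => ℂ) 2))).topologicalClosure :=
  stmt_10_general q hq1 lam hlam A C hA0 hA hC
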